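/- arXiv:2401.10206 — 6 statements merged into one kernel-verified Lean document; each statement's English description precedes it below -/
import Mathlib

section
/- Let X be a compact metric space and Y ⊆ X a totally disconnected subset. For y ∈ Y, let 𝒰_y be the collection of open sets U ⊆ X with y ∈ U and frontier(U) ∩ Y = ∅, and let F(y) = ⋂_{U ∈ 𝒰_y} closure(U). Then F(y) ∩ Y = {y}. -/
/-!
Separate `y` from a point `z ≠ y` of `Y` by a relatively clopen `C ⊆ Y`. Then `C` and `Y \ C` are
separated sets, so in a metric (hence completely normal) space they have disjoint open
neighbourhoods `V ⊇ C` and `W ⊇ Y \ C`. The frontier of `V` misses `C ⊆ V` and `Y \ C ⊆ W`, so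
`closure V` is one of the sets cut out in `F(y)`, and it does not contain `z`.
-/

open Set Topology

/-- `C` is a relatively clopen subset of `Y` (clopen in the subspace `Y`). -/
def RelClopen {α : Type*} [TopologicalSpace α] (Y C : Set α) : Prop :=
  (∃ U : Set α, IsOpen U ∧ C = U ∩ Y) ∧ (∃ F : Set α, IsClosed F ∧ C = F ∩ Y)

/-- `Y` is totally disconnected: any two points of `Y` lie in disjoint relatively
clopen subsets of `Y`. -/
def TotDisconnIn {α : Type*} [TopologicalSpace α] (Y : Set α) : Prop :=
  ∀ a ∈ Y, ∀ b ∈ Y, a ≠ b → ∃ C : Set α, RelClopen Y C ∧ a ∈ C ∧ b ∉ C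

/-- `F(y)`: the intersection of closures of all open sets `U ∋ y` whose
frontier misses `Y`. -/
def Fset {α : Type*} [TopologicalSpace α] (Y : Set α) (y : α) : Set α :=
  ⋂₀ {T | ∃ U : Set α, IsOpen U ∧ y ∈ U ∧ frontier U ∩ Y = ∅ ∧ T = closure U}

section

variable {α : Type*} [TopologicalSpace α] {Y C : Set α} {y : α}

namespace RelClopen

theorem disjoint_closure_left (hC : RelClopen Y C) : Disjoint (closure C) (Y \ C) := by
  obtain ⟨-, ⟨F, hF, hCF⟩⟩ := hC
  refine disjoint_left.2 fun x hx ⟨hxY, hxC⟩ => hxC ?_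
  rw [hCF] at hx ⊢
  exact ⟨hF.closure_subset_iff.2 inter_subset_left hx, hxY⟩

theorem disjoint_closure_right (hC : RelClopen Y C) : Disjoint C (closure (Y \ C)) := by
  obtain ⟨⟨U, hU, rfl⟩, -⟩ := hC
  have hU_disj : Disjoint U (Y \ (U ∩ Y)) :=
    disjoint_left.2 fun x hxU ⟨hxY, hxC⟩ => hxC ⟨hxU, hxY⟩
  exact (hU_disj.closure_right hU).mono_left inter_subset_left

theorem exists_isOpen_frontier_disjoint [CompletelyNormalSpace α] (hC : RelClopen Y C) :
    ∃ V, IsOpen V ∧ C ⊆ V ∧ Disjoint (closure V) (Y \ C) ∧ frontier V ∩ Y = ∅ := by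
  obtain ⟨V, W, hV, hW, hCV, hYW, hVW⟩ := separatedNhds_iff_disjoint.2 <|
    completely_normal hC.disjoint_closure_left hC.disjoint_closure_right
  have hclV : Disjoint (closure V) (Y \ C) := (hVW.closure_left hW).mono_right hYW
  refine ⟨V, hV, hCV, hclV, eq_empty_of_forall_notMem fun x ⟨hxV, hxY⟩ => ?_⟩
  rw [hV.frontier_eq] at hxV
  by_cases hxC : x ∈ C
  · exact hxV.2 (hCV hxC)
  · exact disjoint_left.1 hclV hxV.1 ⟨hxY, hxC⟩

end RelClopen

theorem Fset_subset_closure {U : Set α} (hU : IsOpen U) (hyU : y ∈ U)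
    (hfr : frontier U ∩ Y = ∅) : Fset Y y ⊆ closure U :=
  sInter_subset_of_mem ⟨U, hU, hyU, hfr, rfl⟩

theorem mem_Fset_self : y ∈ Fset Y y :=
  mem_sInter.2 fun _ ⟨_, _, hyU, _, hT⟩ => hT ▸ subset_closure hyU

theorem Fset_inter_subset_singleton [CompletelyNormalSpace α] (hTD : TotDisconnIn Y)
    (hy : y ∈ Y) : Fset Y y ∩ Y ⊆ {y} := by
  rintro z ⟨hz, hzY⟩
  by_contra hne
  obtain ⟨C, hC, hyC, hzC⟩ := hTD y hy z hzY (Ne.symm hne)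
  obtain ⟨V, hV, hCV, hclV, hfr⟩ := hC.exists_isOpen_frontier_disjoint
  exact disjoint_left.1 hclV (Fset_subset_closure hV (hCV hyC) hfr hz) ⟨hzY, hzC⟩

end

theorem stmt0_general {X : Type*} [MetricSpace X] (Y : Set X)
    (hTD : TotDisconnIn Y) (y : X) (hy : y ∈ Y) :
    Fset Y y ∩ Y = {y} :=
  (Fset_inter_subset_singleton hTD hy).antisymm (singleton_subset_iff.2 ⟨mem_Fset_self, hy⟩)

theorem stmt0 {X : Type*} [MetricSpace X] [CompactSpace X] (Y : Set X)
    (hTD : TotDisconnIn Y) (y : X) (hy : y ∈ Y) :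
    Fset Y y ∩ Y = {y} :=
  stmt0_general Y hTD y hy
end

section
/- Let X be a compact metric space, Y ⊆ X totally disconnected, and y ∈ Y. Define F(y) = ⋂ {closure(U) : U open in X, y ∈ U, frontier(U) ∩ Y = ∅}. If F(y) = {y}, then Y is zero-dimensional at y, i.e., y has a neighborhood basis (in Y) of relatively clopen subsets of Y. -/
open Set Topology

/-- `Y` is zero-dimensional at `y`: every relatively open neighborhood of `y` in `Y`
contains a relatively clopen neighborhood of `y`. -/
def ZeroDimAt {α : Type*} [TopologicalSpace α] (Y : Set α) (y : α) : Prop :=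
  ∀ V : Set α, IsOpen V → y ∈ V → ∃ C : Set α, RelClopen Y C ∧ y ∈ C ∧ C ⊆ V

/-!
Since `F(y) = {y}` lies in the open set `V`, compactness gives finitely many open `Uᵢ ∋ y` with
frontiers missing `Y` whose closures already meet inside `V`. Their intersection `U` is open, and
the frontier of a finite intersection lies in the union of the frontiers, so `frontier U` still
misses `Y`. Hence `U ∩ Y = closure U ∩ Y` is clopen in `Y`, contains `y` and lies in `V`.
-/

section

variable {X : Type*} [TopologicalSpace X]

theorem disjoint_frontier_biInter {ι : Type*} {U : ι → Set X} {Y : Set X} (s : Finset ι)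
    (h : ∀ i ∈ s, Disjoint (frontier (U i)) Y) : Disjoint (frontier (⋂ i ∈ s, U i)) Y := by
  classical
  induction s using Finset.induction_on with
  | empty => simp
  | insert a s _ ih =>
    rw [Finset.set_biInter_insert]
    refine (Disjoint.union_left ?_ ?_).mono_left (frontier_inter_subset _ _)
    · exact (h a (Finset.mem_insert_self a s)).mono_left inter_subset_left
    · exact (ih fun i hi => h i (Finset.mem_insert_of_mem hi)).mono_left inter_subset_right

theorem relClopen_inter_of_disjoint_frontier {U Y : Set X} (hU : IsOpen U)
    (h : Disjoint (frontier U) Y) : RelClopen Y (U ∩ Y) := by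
  refine ⟨⟨U, hU, rfl⟩, closure U, isClosed_closure, ?_⟩
  rw [closure_eq_self_union_frontier, union_inter_distrib_right, h.inter_eq, union_empty]

theorem exists_finset_biInter_subset_of_iInter_subset [CompactSpace X] {ι : Type*}
    (t : ι → Set X) (htc : ∀ i, IsClosed (t i)) {V : Set X} (hV : IsOpen V)
    (htV : ⋂ i, t i ⊆ V) : ∃ u : Finset ι, ⋂ i ∈ u, t i ⊆ V := by
  have hdisj : Vᶜ ∩ ⋂ i, t i = ∅ := by rwa [inter_comm, ← sdiff_eq, sdiff_eq_empty]
  obtain ⟨u, hu⟩ := hV.isClosed_compl.isCompact.elim_finite_subfamily_closed t htc hdisj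
  exact ⟨u, by rwa [inter_comm, ← sdiff_eq, sdiff_eq_empty] at hu⟩

theorem Fset_eq_iInter (Y : Set X) (y : X) :
    Fset Y y = ⋂ U : {U : Set X // IsOpen U ∧ y ∈ U ∧ frontier U ∩ Y = ∅}, closure U.1 := by
  ext x
  simp only [Fset, mem_sInter, mem_iInter, mem_ofPred_eq]
  constructor
  · exact fun h U => h _ ⟨U.1, U.2.1, U.2.2.1, U.2.2.2, rfl⟩
  · rintro h _ ⟨U, hU, hyU, hfr, rfl⟩
    exact h ⟨U, hU, hyU, hfr⟩

end

theorem stmt2_general {X : Type*} [MetricSpace X] [CompactSpace X] (Y : Set X)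
    (y : X) (hy : y ∈ Y)
    (hF : Fset Y y = {y}) :
    ZeroDimAt Y y := by
  intro V hV hyV
  obtain ⟨u, hu⟩ := exists_finset_biInter_subset_of_iInter_subset _ (fun _ => isClosed_closure) hV
    (by rw [← Fset_eq_iInter, hF]; exact singleton_subset_iff.2 hyV)
  refine ⟨(⋂ i ∈ u, i.1) ∩ Y, relClopen_inter_of_disjoint_frontier
    (isOpen_biInter_finset fun i _ => i.2.1)
    (disjoint_frontier_biInter u fun i _ => disjoint_iff_inter_eq_empty.2 i.2.2.2),
    ⟨mem_iInter₂.2 fun i _ => i.2.2.1, hy⟩, ?_⟩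
  calc (⋂ i ∈ u, i.1) ∩ Y ⊆ ⋂ i ∈ u, i.1 := inter_subset_left
    _ ⊆ ⋂ i ∈ u, closure i.1 := iInter₂_mono fun i _ => subset_closure
    _ ⊆ V := hu

theorem stmt2 {X : Type*} [MetricSpace X] [CompactSpace X] (Y : Set X)
    (hTD : TotDisconnIn Y) (y : X) (hy : y ∈ Y)
    (hF : Fset Y y = {y}) :
    ZeroDimAt Y y :=
  stmt2_general Y y hy hF
end

section
/- Let S be the unit circle in the complex plane ℂ, with the four points 1, i, −1, −i on it. Let A₁, A₂, A₃, A₄ be pairwise disjoint arcs (homeomorphic images of [0,1]) such that each Aⱼ meets S only in one endpoint aⱼ (a₁ = 1, a₂ = i, a₃ = −1, a₄ = −i), and the other endpoint bⱼ of Aⱼ lies in the open unit disk. Let K ⊆ ℂ \ (A₂ ∪ S ∪ A₄) be a compact connected set containing b₁ and b₃. Then b₂ and b₄ lie in different connected components of ℂ \ (A₁ ∪ S ∪ A₃ ∪ K). -/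
open Set Topology unitInterval

/-- `A` is an arc from `p` to `q`: a homeomorphic image of `[0,1]`
(equivalently, by compactness, the image of a continuous injection). -/
def IsArcFromTo {α : Type*} [TopologicalSpace α] (A : Set α) (p q : α) : Prop :=
  ∃ f : unitInterval → α, Continuous f ∧ Function.Injective f ∧
    Set.range f = A ∧ f 0 = p ∧ f 1 = q

/-! If `b 3` lay in the component of `b 1`, a path joining them there, extended by the arcs `A 1`
and `A 3`, would run from `i` to `-i` in the closed disc and miss `A 0 ∪ A 2 ∪ K`. Then the
connected set `K` lies in one component of the open disc minus that path, so a path through it,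
extended by `A 0` and `A 2`, runs from `1` to `-1` in the closed disc without meeting the first
path. But two such paths must cross: otherwise their difference, followed around the boundary of
the square of parameters, would turn by a strictly negative total angle. -/

open Complex ComplexConjugate Metric

namespace IsArcFromTo

variable {X : Type*} [TopologicalSpace X] {A : Set X} {p q : X}

theorem exists_path (h : IsArcFromTo A p q) : ∃ γ : Path p q, range γ = A := by
  obtain ⟨f, hf, -, hA, h0, h1⟩ := h
  exact ⟨⟨⟨f, hf⟩, h0, h1⟩, hA⟩

theorem right_mem (h : IsArcFromTo A p q) : q ∈ A := by
  obtain ⟨f, -, -, rfl, -, rfl⟩ := h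
  exact mem_range_self 1

theorem isCompact (h : IsArcFromTo A p q) : IsCompact A := by
  obtain ⟨γ, rfl⟩ := h.exists_path
  exact isCompact_range γ.continuous

theorem isPreconnected_diff_left (h : IsArcFromTo A p q) : IsPreconnected (A \ {p}) := by
  obtain ⟨f, hf, hinj, rfl, rfl, -⟩ := h
  have hne : ({0}ᶜ : Set I) = Ioi 0 := by
    ext t
    simp [unitInterval.pos_iff_ne_zero]
  rw [← image_univ, ← image_singleton, ← image_sdiff hinj, ← compl_eq_univ_sdiff, hne]
  exact isPreconnected_Ioi.image f hf.continuousOn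

theorem exists_path_trans_joinedIn {F A' : Set X} {q' p' : X} (hA : IsArcFromTo A p q)
    (hF : JoinedIn F q q') (hA' : IsArcFromTo A' p' q') :
    ∃ γ : Path p p', range γ ⊆ A ∪ F ∪ A' := by
  obtain ⟨α, rfl⟩ := hA.exists_path
  obtain ⟨α', rfl⟩ := hA'.exists_path
  refine ⟨(α.trans hF.somePath).trans α'.symm, ?_⟩
  rw [Path.trans_range, Path.trans_range, Path.symm_range]
  gcongr
  rintro _ ⟨t, rfl⟩
  exact hF.somePath_mem t

end IsArcFromTo

theorem IsPreconnected.subset_ball_of_disjoint_sphere {E : Type*} [PseudoMetricSpace E]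
    {T : Set E} {x : E} {r : ℝ} (hT : IsPreconnected T) (hTS : Disjoint T (sphere x r))
    (hTB : (T ∩ ball x r).Nonempty) : T ⊆ ball x r := by
  refine hT.subset_of_closure_inter_subset isOpen_ball hTB fun z ⟨hzc, hzT⟩ ↦ ?_
  have hle : dist z x ≤ r := closure_ball_subset_closedBall hzc
  have hne : dist z x ≠ r := fun h ↦ hTS.notMem_of_mem_left hzT h
  exact lt_of_le_of_ne hle hne

theorem IsArcFromTo.subset_closedBall {E : Type*} [PseudoMetricSpace E] {A : Set E} {p q x : E}
    {r : ℝ} (h : IsArcFromTo A p q) (hAS : A ∩ sphere x r = {p}) (hq : q ∈ ball x r) :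
    A ⊆ closedBall x r := by
  have hp : p ∈ sphere x r := (hAS.symm ▸ mem_singleton p : p ∈ A ∩ sphere x r).2
  have hqp : q ≠ p := fun h ↦ (ne_of_lt (mem_ball.1 hq)) (h ▸ hp)
  have htail : A \ {p} ⊆ ball x r := by
    refine h.isPreconnected_diff_left.subset_ball_of_disjoint_sphere ?_
      ⟨q, ⟨h.right_mem, hqp⟩, hq⟩
    rw [disjoint_iff_inter_eq_empty, ← inter_sdiff_right_comm, hAS, sdiff_self]
  intro z hz
  rcases eq_or_ne z p with rfl | hzp
  · exact sphere_subset_closedBall hp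
  · exact ball_subset_closedBall (htail ⟨hz, hzp⟩)

theorem IsPreconnected.joinedIn_of_isOpen {X : Type*} [TopologicalSpace X]
    [LocallyPathConnectedSpace X] {K W : Set X} {x y : X} (hK : IsPreconnected K) (hW : IsOpen W)
    (hKW : K ⊆ W) (hx : x ∈ K) (hy : y ∈ K) : JoinedIn W x y := by
  have hxW := hKW hx
  have hC := hW.connectedComponentIn.isConnected_iff_isPathConnected.1
    (isConnected_connectedComponentIn_iff.2 hxW)
  exact (hC.joinedIn x (mem_connectedComponentIn hxW) y
    (hK.subset_connectedComponentIn hx hKW hy)).mono (connectedComponentIn_subset W x)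

theorem IsArcFromTo.exists_path_subset_closedBall {E : Type*} [PseudoMetricSpace E]
    [LocallyPathConnectedSpace E] {A A' C W : Set E} {p q p' q' x : E} {r : ℝ}
    (hA : IsArcFromTo A p q) (hA' : IsArcFromTo A' p' q') (hAS : A ∩ sphere x r = {p})
    (hA'S : A' ∩ sphere x r = {p'}) (hC : IsPreconnected C) (hW : IsOpen W) (hCW : C ⊆ W)
    (hWS : Disjoint W (sphere x r)) (hq : q ∈ C) (hqB : q ∈ ball x r) (hq' : q' ∈ C) :
    ∃ γ : Path p p', range γ ⊆ closedBall x r ∧ range γ ⊆ A ∪ W ∪ A' := by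
  have hCB : C ⊆ ball x r := hC.subset_ball_of_disjoint_sphere (hWS.mono_left hCW) ⟨q, hq, hqB⟩
  obtain ⟨γ, hγ⟩ := hA.exists_path_trans_joinedIn
    (hC.joinedIn_of_isOpen (hW.inter isOpen_ball) (subset_inter hCW hCB) hq hq') hA'
  refine ⟨γ, hγ.trans (union_subset (union_subset ?_ ?_) ?_), hγ.trans ?_⟩
  · exact hA.subset_closedBall hAS hqB
  · exact inter_subset_right.trans ball_subset_closedBall
  · exact hA'.subset_closedBall hA'S (hCB hq')
  · gcongr
    exact inter_subset_left

theorem ContinuousMap.exists_cexp_eq_of_ne_zero {A : Type*} [TopologicalSpace A]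
    [SimplyConnectedSpace A] [LocallyPathConnectedSpace A] (f : C(A, ℂ)) (hf : ∀ a, f a ≠ 0) :
    ∃ g : C(A, ℂ), ∀ a, exp (g a) = f a := by
  obtain ⟨a₀⟩ : Nonempty A := inferInstance
  obtain ⟨g, -, hg⟩ := (isCoveringMapOn_exp.existsUnique_continuousMap_lifts f
    (exp_log (hf a₀)) hf).exists
  exact ⟨g, congrFun hg⟩

theorem Complex.im_sub_im_eq_arg_sub_arg {X : Type*} [TopologicalSpace X] [PreconnectedSpace X]
    {g : X → ℂ} (hg : Continuous g) {v : ℂ} (hv : v ≠ 0)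
    (hre : ∀ x, 0 < (v * exp (g x)).re) (x y : X) :
    (g y).im - (g x).im = arg (v * exp (g y)) - arg (v * exp (g x)) := by
  set h : X → ℂ := fun x ↦ g x + log v - log (v * exp (g x))
  have hh : Continuous h := by
    refine (hg.add continuous_const).sub (continuous_iff_continuousAt.2 fun x ↦ ?_)
    exact (continuousAt_clog (Or.inl (hre x))).comp (f := fun x ↦ v * exp (g x)) (by fun_prop)
  have hmaps : Set.MapsTo h Set.univ (AddSubgroup.zmultiples (2 * Real.pi * Complex.I)) := by
    intro x _
    have hne : v * exp (g x) ≠ 0 := mul_ne_zero hv (exp_ne_zero _)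
    have : exp (h x) = 1 := by
      rw [exp_sub, exp_add, exp_log hv, exp_log hne, mul_comm, div_self hne]
    obtain ⟨n, hn⟩ := exp_eq_one_iff.1 this
    exact AddSubgroup.mem_zmultiples_iff.2 ⟨n, by rw [hn, zsmul_eq_mul]⟩
  have hdisc : IsDiscrete (AddSubgroup.zmultiples (2 * Real.pi * Complex.I) : Set ℂ) :=
    isDiscrete_iff_discreteTopology.2 (NormedSpace.discreteTopology_zmultiples _)
  have := congrArg im (isPreconnected_univ.constant_of_mapsTo hdisc hh.continuousOn hmaps
    (Set.mem_univ x) (Set.mem_univ y))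
  simp only [h, sub_im, add_im, log_im] at this
  linarith

theorem Complex.re_sub_mul_conj_pos {u w : ℂ} (hw : ‖w‖ ≤ ‖u‖) (hne : w ≠ u) :
    0 < ((u - w) * conj u).re := by
  have hsq : 0 < ‖u - w‖ ^ 2 := pow_pos (norm_pos_iff.2 (sub_ne_zero.2 hne.symm)) 2
  have hnorm : ‖w‖ ^ 2 ≤ ‖u‖ ^ 2 := by gcongr
  simp only [Complex.sq_norm, normSq_apply, sub_re, sub_im] at hsq hnorm
  simp only [mul_re, sub_re, sub_im, conj_re, conj_im]
  nlinarith

theorem Complex.arg_lt_arg_of_im_neg_of_im_nonneg {a b : ℂ} (ha : a.im < 0) (hb : 0 ≤ b.im) :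
    arg a < arg b :=
  (arg_neg_iff.2 ha).trans_le (arg_nonneg_iff.2 hb)

/- Lift `Q t - P s` through `exp` to `g` on the square. On each side one curve sits at a point of
the circle, which keeps `Q t - P s` in an open half-plane, so `im ∘ g` changes along that side by
the change of argument between its corners; the corner signs make all four changes negative,
although they add up to zero around the square. -/
theorem exists_apply_eq_apply_of_crossing_disc {P Q : ℝ → ℂ} (hP : Continuous P)
    (hQ : Continuous Q) (hPn : ∀ s, ‖P s‖ ≤ 1) (hQn : ∀ t, ‖Q t‖ ≤ 1) (hP0 : P 0 = 1)
    (hP1 : P 1 = -1) (hQ0 : Q 0 = Complex.I) (hQ1 : Q 1 = -Complex.I) : ∃ s t, P s = Q t := by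
  by_contra! hPQ
  obtain ⟨g, hg⟩ := ContinuousMap.exists_cexp_eq_of_ne_zero
    ⟨fun p : ℝ × ℝ ↦ Q p.2 - P p.1, by fun_prop⟩ fun p ↦ sub_ne_zero.2 (hPQ _ _).symm
  replace hg : ∀ s t, exp (g (s, t)) = Q t - P s := fun s t ↦ hg (s, t)
  have hbot (s : ℝ) : 0 < (-Complex.I * exp (g (s, 0))).re := by
    rw [hg, hQ0]
    convert re_sub_mul_conj_pos (by simpa using hPn s) (hQ0 ▸ hPQ s 0) using 2
    simp [mul_comm]
  have hright (t : ℝ) : 0 < (1 * exp (g (1, t))).re := by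
    rw [hg, hP1]
    convert re_sub_mul_conj_pos (by simpa using hQn t) (hP1 ▸ hPQ 1 t).symm using 2
    simp
  have htop (s : ℝ) : 0 < (Complex.I * exp (g (s, 1))).re := by
    rw [hg, hQ1]
    convert re_sub_mul_conj_pos (by simpa using hPn s) (hQ1 ▸ hPQ s 1) using 2
    simp [mul_comm]
  have hleft (t : ℝ) : 0 < (-1 * exp (g (0, t))).re := by
    rw [hg, hP0]
    convert re_sub_mul_conj_pos (by simpa using hQn t) (hP0 ▸ hPQ 0 t).symm using 2
    simp
  have e₁ := im_sub_im_eq_arg_sub_arg (g := fun s ↦ g (s, 0)) (by fun_prop) (by simp) hbot 0 1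
  have e₂ := im_sub_im_eq_arg_sub_arg (g := fun t ↦ g (1, t)) (by fun_prop) (by simp) hright 0 1
  have e₃ := im_sub_im_eq_arg_sub_arg (g := fun s ↦ g (s, 1)) (by fun_prop) (by simp) htop 1 0
  have e₄ := im_sub_im_eq_arg_sub_arg (g := fun t ↦ g (0, t)) (by fun_prop) (by simp) hleft 1 0
  have a₁ : arg (-Complex.I * exp (g (1, 0))) < arg (-Complex.I * exp (g (0, 0))) :=
    arg_lt_arg_of_im_neg_of_im_nonneg (by simpa using hright 0) (by simpa using (hleft 0).le)
  have a₂ : arg (1 * exp (g (1, 1))) < arg (1 * exp (g (1, 0))) :=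
    arg_lt_arg_of_im_neg_of_im_nonneg (by simpa using htop 1) (by simpa using (hbot 1).le)
  have a₃ : arg (Complex.I * exp (g (0, 1))) < arg (Complex.I * exp (g (1, 1))) :=
    arg_lt_arg_of_im_neg_of_im_nonneg (by simpa using hleft 1) (by simpa using (hright 1).le)
  have a₄ : arg (-1 * exp (g (0, 0))) < arg (-1 * exp (g (0, 1))) :=
    arg_lt_arg_of_im_neg_of_im_nonneg (by simpa using hbot 0) (by simpa using (htop 0).le)
  linarith

theorem Path.nonempty_range_inter_range_of_subset_closedBall (γ : Path (1 : ℂ) (-1))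
    (δ : Path Complex.I (-Complex.I)) (hγ : range γ ⊆ closedBall 0 1)
    (hδ : range δ ⊆ closedBall 0 1) :
    (range γ ∩ range δ).Nonempty := by
  have hnorm {z w : ℂ} (η : Path z w) (hη : range η ⊆ closedBall 0 1) (s : ℝ) :
      ‖η.extend s‖ ≤ 1 :=
    mem_closedBall_zero_iff.1 (hη (η.extend_range ▸ mem_range_self s))
  obtain ⟨s, t, hst⟩ := exists_apply_eq_apply_of_crossing_disc γ.continuous_extend
    δ.continuous_extend (hnorm γ hγ) (hnorm δ hδ) γ.extend_zero γ.extend_one δ.extend_zero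
    δ.extend_one
  exact ⟨γ.extend s, γ.extend_range ▸ mem_range_self s, hst ▸ δ.extend_range ▸ mem_range_self t⟩

theorem stmt5
    (S : Set ℂ) (hS : S = Metric.sphere (0 : ℂ) 1)
    (a b : Fin 4 → ℂ)
    (ha0 : a 0 = 1) (ha1 : a 1 = Complex.I) (ha2 : a 2 = -1) (ha3 : a 3 = -Complex.I)
    (A : Fin 4 → Set ℂ)
    (hArc : ∀ i, IsArcFromTo (A i) (a i) (b i))
    (hdisj : ∀ i j, i ≠ j → Disjoint (A i) (A j))
    (hAS : ∀ i, A i ∩ S = {a i})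
    (hb : ∀ i, ‖b i‖ < 1)
    (K : Set ℂ) (hKsub : K ⊆ (A 1 ∪ S ∪ A 3)ᶜ)
    (hKcomp : IsCompact K) (hKconn : IsConnected K)
    (hb1K : b 0 ∈ K) (hb3K : b 2 ∈ K) :
    b 3 ∉ connectedComponentIn ((A 0 ∪ S ∪ A 2 ∪ K)ᶜ) (b 1) := by
  subst hS
  intro hb3U
  set B := A 0 ∪ sphere 0 1 ∪ A 2 ∪ K
  have hB : IsClosed B := (((hArc 0).isCompact.isClosed.union isClosed_sphere).union
    (hArc 2).isCompact.isClosed).union hKcomp.isClosed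
  have hSB : sphere 0 1 ⊆ B := fun _ h ↦ .inl (.inl (.inr h))
  obtain ⟨δ, hδB, hδ⟩ := (ha1 ▸ hArc 1).exists_path_subset_closedBall (ha3 ▸ hArc 3)
    (ha1 ▸ hAS 1) (ha3 ▸ hAS 3) isPreconnected_connectedComponentIn hB.isOpen_compl
    (connectedComponentIn_subset _ _) (disjoint_compl_left.mono_right hSB)
    (mem_connectedComponentIn (connectedComponentIn_nonempty_iff.1 ⟨_, hb3U⟩))
    (mem_ball_zero_iff.2 (hb 1)) hb3U
  have hKS : Disjoint K (sphere 0 1) :=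
    (subset_compl_iff_disjoint_right.1 hKsub).mono_right fun _ h ↦ .inl (.inr h)
  have hKδ : Disjoint K (range δ) := disjoint_left.2 fun z hzK hzδ ↦ by
    have := hKsub hzK
    have := hδ hzδ
    simp only [B, mem_union, mem_compl_iff] at *
    tauto
  obtain ⟨γ, hγB, hγ⟩ := (ha0 ▸ hArc 0).exists_path_subset_closedBall (ha2 ▸ hArc 2)
    (ha0 ▸ hAS 0) (ha2 ▸ hAS 2) hKconn.isPreconnected
    ((isCompact_range δ.continuous).isClosed.union isClosed_sphere).isOpen_compl
    (subset_compl_iff_disjoint_right.2 (hKδ.union_right hKS))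
    (disjoint_compl_left.mono_right subset_union_right) hb1K (mem_ball_zero_iff.2 (hb 0)) hb3K
  obtain ⟨z, hzγ, hzδ⟩ := γ.nonempty_range_inter_range_of_subset_closedBall δ hγB hδB
  have hsep (i : Fin 4) (hiB : A i ⊆ B) (h1 : i ≠ 1) (h3 : i ≠ 3) :
      Disjoint (A i) (A 1 ∪ Bᶜ ∪ A 3) :=
    ((hdisj i 1 h1).union_right (disjoint_compl_right.mono_left hiB)).union_right (hdisj i 3 h3)
  rcases hγ hzγ with (hz | hz) | hz
  · exact (hsep 0 (fun _ h ↦ .inl (.inl (.inl h))) (by decide) (by decide)).notMem_of_mem_left hz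
      (hδ hzδ)
  · exact hz (.inl hzδ)
  · exact (hsep 2 (fun _ h ↦ .inl (.inr h)) (by decide) (by decide)).notMem_of_mem_left hz
      (hδ hzδ)
end

section
/- Every Suslinian plane continuum is contained in a locally connected Suslinian plane continuum. -/
open Set Topology

/-- `X` is Suslinian: every family of pairwise disjoint nondegenerate
subcontinua of `X` is countable. -/
def Suslinian {α : Type*} [TopologicalSpace α] (X : Set α) : Prop :=
  ∀ 𝒞 : Set (Set α), (∀ K ∈ 𝒞, K ⊆ X ∧ IsCompact K ∧ IsConnected K ∧ K.Nontrivial) →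
    𝒞.Pairwise Disjoint → 𝒞.Countable

/-!
Add to `X` the boundaries of all dyadic squares of side `2⁻ᵏ` (for every `k`) that have a vertex
within `2 · 2⁻ᵏ` of `X`. Every such square is joined to `X` by a chain of squares of its own
level followed by the nested squares around a point of `X`, and these connected sets have small
diameter when `k` is large: this gives connectedness, and local connectedness at points of `X`.
Only finitely many squares come near a point off `X`, so the new set is compact and near such a
point it is a finite union of segments. A nondegenerate subcontinuum not contained in `X`
therefore meets one of the countably many grid lines in a set of positive length, and disjoint
subcontinua meet a line in disjoint sets, so countably many of them are not contained in `X`.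
-/

open Metric MeasureTheory

lemma locallyConnectedSpace_of_forall_exists_isPreconnected {α : Type*} [PseudoMetricSpace α]
    {S : Set α}
    (h : ∀ p ∈ S, ∀ ε > 0, ∃ δ > 0, ∀ q ∈ S, dist q p < δ →
      ∃ P ⊆ S ∩ ball p ε, IsPreconnected P ∧ p ∈ P ∧ q ∈ P) :
    LocallyConnectedSpace S := by
  rw [locallyConnectedSpace_iff_connected_subsets]
  intro p U hU
  obtain ⟨ε, hε, hεU⟩ := Metric.mem_nhds_iff.1 hU
  obtain ⟨δ, hδ, hjoin⟩ := h p p.2 ε hε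
  have hC : connectedComponentIn (S ∩ ball (p : α) ε) p ⊆ S ∩ ball (p : α) ε :=
    connectedComponentIn_subset _ _
  refine ⟨Subtype.val ⁻¹' connectedComponentIn (S ∩ ball (p : α) ε) p, ?_, ?_, ?_⟩
  · refine Filter.mem_of_superset (ball_mem_nhds p hδ) fun q hq => ?_
    obtain ⟨P, hPS, hP, hpP, hqP⟩ := hjoin q q.2 hq
    exact hP.subset_connectedComponentIn hpP hPS hqP
  · rw [← Topology.IsInducing.subtypeVal.isPreconnected_image, Subtype.image_preimage_coe,
      inter_eq_self_of_subset_right (hC.trans inter_subset_left)]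
    exact isPreconnected_connectedComponentIn
  · exact fun q hq => hεU (hC hq).2

lemma Set.Finite.exists_pos_forall_mem_of_dist_lt {α ι : Type*} [PseudoMetricSpace α] {E : Set ι}
    (hE : E.Finite)
    {f : ι → Set α} (hf : ∀ i ∈ E, IsClosed (f i)) (p : α) :
    ∃ δ > 0, ∀ i ∈ E, ∀ q ∈ f i, dist q p < δ → p ∈ f i := by
  have hG : IsClosed (⋃ i ∈ {i ∈ E | p ∉ f i}, f i) :=
    (hE.subset (sep_subset _ _)).isClosed_biUnion fun i hi => hf i hi.1
  have hpG : p ∉ ⋃ i ∈ {i ∈ E | p ∉ f i}, f i := fun h => by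
    obtain ⟨i, hi, hpi⟩ := mem_iUnion₂.1 h
    exact hi.2 hpi
  obtain ⟨δ, hδ, hball⟩ := Metric.isOpen_iff.1 hG.isOpen_compl p hpG
  refine ⟨δ, hδ, fun i hi q hq hqp => ?_⟩
  by_contra hp
  exact hball hqp (mem_biUnion ⟨hi, hp⟩ hq)

lemma LipschitzWith.volume_image_eq_zero {L : NNReal} {f : ℝ → ℝ} (hf : LipschitzWith L f)
    {s : Set ℝ} (hs : volume s = 0) : volume (f '' s) = 0 := by
  rw [← hausdorffMeasure_real] at hs ⊢
  refine le_antisymm ((hf.hausdorffMeasure_image_le zero_le_one s).trans ?_) bot_le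
  rw [hs, mul_zero]

/-- The distances to `z` of the points of `K` fill an interval `[0, ρ]`, while those of the points
on each curve form a Lipschitz image of its preimage of `K`. -/
lemma exists_volume_preimage_pos {α ι : Type*} [MetricSpace α] {E : Set ι} (hE : E.Finite) {γ : ι → ℝ → α}
    (hγ : ∀ i ∈ E, ∃ L, LipschitzWith L (γ i)) {K : Set α} (hK : IsPreconnected K)
    (hKnt : K.Nontrivial) {z : α} (hz : z ∈ K) {r : ℝ} (hr : 0 < r)
    (hKE : K ∩ ball z r ⊆ ⋃ i ∈ E, range (γ i)) :
    ∃ i ∈ E, 0 < volume (γ i ⁻¹' K) := by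
  obtain ⟨y, hy, hyz⟩ := hKnt.exists_ne z
  by_contra! hnull
  set ρ := min r (dist y z)
  have hcover : Ioo 0 ρ ⊆ ⋃ i ∈ E, (fun s => dist (γ i s) z) '' (γ i ⁻¹' K) := by
    intro t ht
    have hdist : IsPreconnected ((dist · z) '' K) :=
      hK.image _ (continuous_id.dist continuous_const).continuousOn
    obtain ⟨w, hw, rfl⟩ := hdist.Icc_subset ⟨z, hz, dist_self z⟩ ⟨y, hy, rfl⟩
      ⟨ht.1.le, ht.2.le.trans (min_le_right _ _)⟩
    obtain ⟨i, hi, hwi⟩ := mem_iUnion₂.1 (hKE ⟨hw, ht.2.trans_le (min_le_left _ _)⟩)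
    obtain ⟨s, rfl⟩ := hwi
    exact mem_biUnion hi ⟨s, hw, rfl⟩
  have hzero : volume (Ioo 0 ρ) = 0 := by
    refine measure_mono_null hcover ((measure_biUnion_null_iff hE.countable).2 fun i hi => ?_)
    obtain ⟨L, hL⟩ := hγ i hi
    exact ((LipschitzWith.dist_left z).comp hL).volume_image_eq_zero
      (nonpos_iff_eq_zero.1 (hnull i hi))
  have hρ : 0 < ρ := lt_min hr (dist_pos.2 hyz)
  exact hρ.not_ge (by simpa [Real.volume_Ioo] using hzero)

lemma countable_setOf_volume_preimage_pos {α : Type*} [TopologicalSpace α] {𝒞 : Set (Set α)} (h𝒞 : 𝒞.Pairwise Disjoint)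
    (hclosed : ∀ K ∈ 𝒞, IsClosed K) {γ : ℝ → α} (hγ : Continuous γ) :
    {K ∈ 𝒞 | 0 < volume (γ ⁻¹' K)}.Countable := by
  have h := Measure.countable_meas_pos_of_disjoint_iUnion (μ := volume)
    (As := fun K : 𝒞 => γ ⁻¹' K) (fun K => ((hclosed K K.2).preimage hγ).measurableSet)
    (fun K K' hne => (h𝒞 K.2 K'.2 (Subtype.coe_ne_coe.2 hne)).preimage γ)
  refine (h.image Subtype.val).mono ?_
  rintro K ⟨hK, hpos⟩
  exact ⟨⟨K, hK⟩, hpos, rfl⟩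

lemma segment_subset_range_lineMap {E : Type*} [AddCommGroup E] [Module ℝ E] (a b : E) :
    segment ℝ a b ⊆ range (AffineMap.lineMap a b : ℝ → E) := by
  rw [segment_eq_image_lineMap]
  exact image_subset_range _ _

lemma isCompact_segment {E : Type*} [NormedAddCommGroup E] [NormedSpace ℝ E] (a b : E) :
    IsCompact (segment ℝ a b) := by
  rw [segment_eq_image_lineMap]
  exact isCompact_Icc.image AffineMap.lineMap_continuous

namespace DyadicGrid

noncomputable def side (k : ℕ) : ℝ := 2⁻¹ ^ k

lemma side_pos (k : ℕ) : 0 < side k := by unfold side; positivity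

lemma side_add (k n : ℕ) : side (k + n) = side k / 2 ^ n := by
  simp [side, pow_add, div_eq_mul_inv]

lemma side_antitone : Antitone side := fun _ _ h =>
  pow_le_pow_of_le_one (by norm_num) (by norm_num) h

lemma side_le_one (k : ℕ) : side k ≤ 1 :=
  (side_antitone (Nat.zero_le k)).trans_eq (pow_zero _)

lemma exists_side_lt {ε : ℝ} (hε : 0 < ε) : ∃ k, side k < ε :=
  exists_pow_lt_of_lt_one hε (by norm_num)

noncomputable def vertex (k : ℕ) (v : ℤ × ℤ) : ℝ × ℝ := (v.1 * side k, v.2 * side k)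

lemma dist_vertex_le_iff {k : ℕ} {v : ℤ × ℤ} {x : ℝ × ℝ} {r : ℝ} :
    dist (vertex k v) x ≤ r ↔ |v.1 * side k - x.1| ≤ r ∧ |v.2 * side k - x.2| ≤ r := by
  simp [vertex, Prod.dist_eq, Real.dist_eq]

lemma dist_vertex_vertex (k : ℕ) (v w : ℤ × ℤ) :
    dist (vertex k v) (vertex k w) = side k * dist v w := by
  simp only [vertex, Prod.dist_eq, Real.dist_eq, Int.dist_eq, ← sub_mul, abs_mul,
    abs_of_pos (side_pos k), ← max_mul_of_nonneg _ _ (side_pos k).le]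
  ring

lemma vertex_succ_two_mul (k : ℕ) (v : ℤ × ℤ) : vertex (k + 1) (2 * v) = vertex k v := by
  simp only [vertex, side_add, Prod.fst_mul, Prod.snd_mul, Prod.fst_ofNat, Prod.snd_ofNat]
  push_cast
  ring_nf

noncomputable def cornerOf (k : ℕ) (x : ℝ × ℝ) : ℤ × ℤ := (⌊x.1 / side k⌋, ⌊x.2 / side k⌋)

lemma dist_vertex_cornerOf_le (k : ℕ) (x : ℝ × ℝ) : dist (vertex k (cornerOf k x)) x ≤ side k := by
  have key : ∀ a : ℝ, |⌊a / side k⌋ * side k - a| ≤ side k := fun a => by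
    have h₁ := (le_div_iff₀ (side_pos k)).1 (Int.floor_le (a / side k))
    have h₂ := (div_lt_iff₀ (side_pos k)).1 (Int.lt_floor_add_one (a / side k))
    rw [abs_le]
    constructor <;> nlinarith [side_pos k]
  exact dist_vertex_le_iff.2 ⟨key _, key _⟩

lemma cornerOf_succ (k : ℕ) (x : ℝ × ℝ) :
    2 * cornerOf k x ≤ cornerOf (k + 1) x ∧ cornerOf (k + 1) x ≤ 2 * cornerOf k x + 1 := by
  have h : ∀ a : ℝ, a / side (k + 1) = 2 * (a / side k) := fun a => by
    rw [side_add]; field_simp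
  have floor_two_mul_mem (a : ℝ) : 2 * ⌊a⌋ ≤ ⌊2 * a⌋ ∧ ⌊2 * a⌋ ≤ 2 * ⌊a⌋ + 1 := by
    have h₁ := Int.floor_le a
    have h₂ := Int.lt_floor_add_one a
    have h₃ : ⌊2 * a⌋ < 2 * ⌊a⌋ + 2 := Int.floor_lt.2 (by push_cast; linarith)
    exact ⟨Int.le_floor.2 (by push_cast; linarith), by omega⟩
  simp only [cornerOf, h, Prod.le_def, Prod.fst_mul, Prod.snd_mul, Prod.fst_ofNat, Prod.snd_ofNat,
    Prod.fst_add, Prod.snd_add, Prod.fst_one, Prod.snd_one]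
  have := floor_two_mul_mem (x.1 / side k)
  have := floor_two_mul_mem (x.2 / side k)
  omega

noncomputable def squareEdges (k : ℕ) (v : ℤ × ℤ) : Set ((ℝ × ℝ) × (ℝ × ℝ)) :=
  {(vertex k v, vertex k (v + (1, 0))), (vertex k (v + (1, 0)), vertex k (v + 1)),
    (vertex k (v + 1), vertex k (v + (0, 1))), (vertex k (v + (0, 1)), vertex k v)}

def square (k : ℕ) (v : ℤ × ℤ) : Set (ℝ × ℝ) := ⋃ e ∈ squareEdges k v, segment ℝ e.1 e.2

lemma finite_squareEdges (k : ℕ) (v : ℤ × ℤ) : (squareEdges k v).Finite := by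
  simp [squareEdges]

lemma isPreconnected_square (k : ℕ) (v : ℤ × ℤ) : IsPreconnected (square k v) := by
  have hseg := fun a b : ℝ × ℝ => (convex_segment a b).isPreconnected
  simp only [square, squareEdges, biUnion_insert, biUnion_singleton]
  refine (hseg _ _).union _ (right_mem_segment _ _ _) (Or.inl (left_mem_segment _ _ _)) ?_
  refine (hseg _ _).union _ (right_mem_segment _ _ _) (Or.inl (left_mem_segment _ _ _)) ?_
  exact (hseg _ _).union _ (right_mem_segment _ _ _) (left_mem_segment _ _ _) (hseg _ _)

lemma square_subset_of_convex {k : ℕ} {v : ℤ × ℤ} {C : Set (ℝ × ℝ)} (hC : Convex ℝ C)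
    (hcorner : ∀ w, v ≤ w → w ≤ v + 1 → vertex k w ∈ C) : square k v ⊆ C := by
  have h : ∀ w : ℤ × ℤ, w ∈ ({v, v + (1, 0), v + 1, v + (0, 1)} : Set (ℤ × ℤ)) →
      vertex k w ∈ C := by
    intro w hw
    simp only [mem_insert_iff, mem_singleton_iff] at hw
    refine hcorner w ?_ ?_ <;> rcases hw with rfl | rfl | rfl | rfl <;> simp [Prod.le_def]
  refine iUnion₂_subset fun e he => hC.segment_subset ?_ ?_ <;>
  · simp only [squareEdges, mem_insert_iff, mem_singleton_iff] at he
    rcases he with rfl | rfl | rfl | rfl <;> exact h _ (by simp)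

lemma vertex_mem_square {k : ℕ} {v w : ℤ × ℤ} (h₁ : v ≤ w) (h₂ : w ≤ v + 1) :
    vertex k w ∈ square k v := by
  have hw : w = v ∨ w = v + (1, 0) ∨ w = v + 1 ∨ w = v + (0, 1) := by
    simp only [Prod.le_def, Prod.fst_add, Prod.snd_add, Prod.fst_one, Prod.snd_one] at h₁ h₂
    simp only [Prod.ext_iff, Prod.fst_add, Prod.snd_add, Prod.fst_one, Prod.snd_one]
    omega
  rcases hw with rfl | rfl | rfl | rfl
  · exact mem_biUnion (Or.inl rfl) (left_mem_segment _ _ _)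
  · exact mem_biUnion (Or.inr (Or.inl rfl)) (left_mem_segment _ _ _)
  · exact mem_biUnion (Or.inr (Or.inr (Or.inl rfl))) (left_mem_segment _ _ _)
  · exact mem_biUnion (Or.inr (Or.inr (Or.inr rfl))) (left_mem_segment _ _ _)

lemma vertex_mem_square_self (k : ℕ) (v : ℤ × ℤ) : vertex k v ∈ square k v :=
  vertex_mem_square le_rfl (by simp)

lemma square_subset_closedBall {k : ℕ} {v : ℤ × ℤ} {x : ℝ × ℝ} {r : ℝ}
    (h : dist (vertex k v) x ≤ r) : square k v ⊆ closedBall x (r + side k) := by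
  refine square_subset_of_convex (convex_closedBall _ _) fun w h₁ h₂ => ?_
  rw [dist_vertex_le_iff] at h
  simp only [Prod.le_def, Prod.fst_add, Prod.snd_add, Prod.fst_one, Prod.snd_one] at h₁ h₂
  have key : ∀ (a b : ℤ) (c : ℝ), a ≤ b → b ≤ a + 1 → |a * side k - c| ≤ r →
      |b * side k - c| ≤ r + side k := fun a b c hab hba hac => by
    have hab' : (a : ℝ) ≤ b := by exact_mod_cast hab
    have hba' : (b : ℝ) ≤ a + 1 := by exact_mod_cast hba
    rw [abs_le] at hac ⊢
    constructor <;> nlinarith [side_pos k]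
  exact mem_closedBall.2 (dist_vertex_le_iff.2 ⟨key _ _ _ h₁.1 h₂.1 h.1, key _ _ _ h₁.2 h₂.2 h.2⟩)

lemma square_cornerOf_subset_closedBall (k : ℕ) (x : ℝ × ℝ) :
    square k (cornerOf k x) ⊆ closedBall x (2 * side k) :=
  (square_subset_closedBall (dist_vertex_cornerOf_le k x)).trans_eq (by ring_nf)

lemma square_cornerOf_inter_succ_nonempty (k : ℕ) (x : ℝ × ℝ) :
    (square k (cornerOf k x) ∩ square (k + 1) (cornerOf (k + 1) x)).Nonempty := by
  have h := cornerOf_succ k x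
  have hsucc : ∀ w, cornerOf (k + 1) x ≤ 2 * w → 2 * w ≤ cornerOf (k + 1) x + 1 →
      vertex k w ∈ square (k + 1) (cornerOf (k + 1) x) := fun w h₁ h₂ =>
    vertex_succ_two_mul k w ▸ vertex_mem_square h₁ h₂
  refine ⟨_, vertex_mem_square ?_ ?_, hsucc (cornerOf (k + 1) x - cornerOf k x) ?_ ?_⟩ <;>
  · simp only [Prod.le_def, Prod.fst_mul, Prod.snd_mul, Prod.fst_ofNat, Prod.snd_ofNat,
      Prod.fst_add, Prod.snd_add, Prod.fst_one, Prod.snd_one, Prod.fst_sub, Prod.snd_sub] at h ⊢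
    omega

variable {X : Set (ℝ × ℝ)}

def Near (X : Set (ℝ × ℝ)) (k : ℕ) (v : ℤ × ℤ) : Prop :=
  ∃ x ∈ X, dist (vertex k v) x ≤ 2 * side k

def grid (X : Set (ℝ × ℝ)) : Set (ℝ × ℝ) := ⋃ (k : ℕ) (v : ℤ × ℤ) (_ : Near X k v), square k v

lemma mem_grid {q : ℝ × ℝ} : q ∈ grid X ↔ ∃ k v, Near X k v ∧ q ∈ square k v := by
  simp [grid]

lemma square_subset_grid {k : ℕ} {v : ℤ × ℤ} (h : Near X k v) : square k v ⊆ grid X :=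
  fun _ hq => mem_grid.2 ⟨k, v, h, hq⟩

def edgesUpTo (X : Set (ℝ × ℝ)) (N : ℕ) : Set ((ℝ × ℝ) × (ℝ × ℝ)) :=
  ⋃ k ∈ Iic N, ⋃ v ∈ {v | Near X k v}, squareEdges k v

lemma finite_setOf_near (hX : Bornology.IsBounded X) (k : ℕ) : {v | Near X k v}.Finite := by
  obtain ⟨R, hR⟩ := hX.subset_closedBall 0
  refine (isCompact_closedBall (0 : ℤ × ℤ) ((2 * side k + R) / side k)).finite_of_discrete.subset
    fun v ⟨x, hx, hvx⟩ => ?_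
  have h0 : vertex k 0 = 0 := by simp [vertex]
  have hdist := dist_vertex_vertex k v 0
  rw [h0] at hdist
  rw [mem_closedBall, le_div_iff₀ (side_pos k), mul_comm, ← hdist]
  linarith [dist_triangle (vertex k v) x 0, mem_closedBall.1 (hR hx)]

lemma finite_edgesUpTo (hX : Bornology.IsBounded X) (N : ℕ) : (edgesUpTo X N).Finite :=
  (finite_Iic N).biUnion fun k _ =>
    (finite_setOf_near hX k).biUnion fun v _ => finite_squareEdges k v

lemma segment_subset_grid {N : ℕ} {e : (ℝ × ℝ) × (ℝ × ℝ)} (he : e ∈ edgesUpTo X N) :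
    segment ℝ e.1 e.2 ⊆ grid X := by
  simp only [edgesUpTo, mem_iUnion, mem_Iic, mem_ofPred_eq] at he
  obtain ⟨k, -, v, hv, he⟩ := he
  exact (subset_biUnion_of_mem (u := fun e : (ℝ × ℝ) × (ℝ × ℝ) => segment ℝ e.1 e.2) he).trans
    (square_subset_grid hv)

lemma square_subset_edgesUpTo {k N : ℕ} {v : ℤ × ℤ} (hv : Near X k v) (hk : k ≤ N) :
    square k v ⊆ ⋃ e ∈ edgesUpTo X N, segment ℝ e.1 e.2 := by
  refine biUnion_mono (fun e he => ?_) fun _ _ => subset_rfl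
  simp only [edgesUpTo, mem_iUnion]
  exact ⟨k, hk, v, hv, he⟩

/-- A square of level `k` lies within `3 * side k` of `X`, so only finitely many levels reach a
point off `X`. -/
lemma exists_inter_ball_subset (hXc : IsClosed X) (hXne : X.Nonempty) {z : ℝ × ℝ} (hz : z ∉ X) :
    ∃ N, ∃ r > 0, (X ∪ grid X) ∩ ball z r ⊆ ⋃ e ∈ edgesUpTo X N, segment ℝ e.1 e.2 := by
  have hd := (hXc.notMem_iff_infDist_pos hXne).1 hz
  obtain ⟨N, hN⟩ := exists_side_lt (show 0 < infDist z X / 6 by positivity)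
  refine ⟨N, infDist z X / 2, by positivity, ?_⟩
  rintro q ⟨hq | hq, hqz⟩ <;> rw [mem_ball'] at hqz
  · linarith [infDist_le_dist_of_mem (x := z) hq]
  obtain ⟨k, v, ⟨x, hx, hvx⟩, hqs⟩ := mem_grid.1 hq
  have hqx := mem_closedBall.1 (square_subset_closedBall hvx hqs)
  have hk : k ≤ N := by
    by_contra! hNk
    have := side_antitone hNk.le
    linarith [infDist_le_dist_of_mem (x := z) hx, dist_triangle z q x]
  exact square_subset_edgesUpTo ⟨x, hx, hvx⟩ hk hqs

lemma exists_segment_subset_grid (hXb : Bornology.IsBounded X) (N : ℕ) (p : ℝ × ℝ) :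
    ∃ δ > 0, ∀ q ∈ ⋃ e ∈ edgesUpTo X N, segment ℝ e.1 e.2, dist q p < δ →
      segment ℝ p q ⊆ grid X := by
  obtain ⟨δ, hδ, h⟩ := (finite_edgesUpTo hXb N).exists_pos_forall_mem_of_dist_lt
    (fun e _ => (isCompact_segment e.1 e.2).isClosed) p
  refine ⟨δ, hδ, fun q hq hqp => ?_⟩
  obtain ⟨e, he, hqe⟩ := mem_iUnion₂.1 hq
  exact ((convex_segment _ _).segment_subset (h e he q hqe hqp) hqe).trans (segment_subset_grid he)

lemma abs_intCast_mul_sub_le_of_mem_uIcc {a b i : ℤ} (hi : i ∈ uIcc a b) {s c r : ℝ}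
    (hs : 0 ≤ s) (ha : |a * s - c| ≤ r) (hb : |b * s - c| ≤ r) : |i * s - c| ≤ r := by
  rw [mem_uIcc] at hi
  rw [abs_le] at ha hb ⊢
  rcases hi with ⟨h₁, h₂⟩ | ⟨h₁, h₂⟩ <;>
  · have h₁' := (Int.cast_le (R := ℝ)).2 h₁
    have h₂' := (Int.cast_le (R := ℝ)).2 h₂
    constructor <;> nlinarith

lemma isPreconnected_biUnion_square_row (k : ℕ) (a a' b : ℤ) :
    IsPreconnected (⋃ i ∈ uIcc a a', square k (i, b)) :=
  IsPreconnected.biUnion_of_chain ordConnected_uIcc (fun _ _ => isPreconnected_square _ _)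
    fun i _ _ => ⟨vertex k (i + 1, b), vertex_mem_square (by simp [Prod.le_def])
      (by simp [Prod.le_def]), by simpa using vertex_mem_square_self k (i + 1, b)⟩

lemma isPreconnected_biUnion_square_column (k : ℕ) (a b b' : ℤ) :
    IsPreconnected (⋃ j ∈ uIcc b b', square k (a, j)) :=
  IsPreconnected.biUnion_of_chain ordConnected_uIcc (fun _ _ => isPreconnected_square _ _)
    fun j _ _ => ⟨vertex k (a, j + 1), vertex_mem_square (by simp [Prod.le_def])
      (by simp [Prod.le_def]), by simpa using vertex_mem_square_self k (a, j + 1)⟩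

/-- An L-shaped chain of squares; the vertices of all of them stay within `2 * side k` of `x`. -/
lemma exists_walk {k : ℕ} {v : ℤ × ℤ} {x : ℝ × ℝ} (hx : x ∈ X)
    (hv : dist (vertex k v) x ≤ 2 * side k) :
    ∃ W ⊆ grid X ∩ closedBall x (3 * side k), IsPreconnected W ∧ square k v ⊆ W ∧
      square k (cornerOf k x) ⊆ W := by
  set c := cornerOf k x
  have hc : dist (vertex k c) x ≤ 2 * side k :=
    (dist_vertex_cornerOf_le k x).trans (by linarith [side_pos k])
  rw [dist_vertex_le_iff] at hv hc
  have hW : ∀ w : ℤ × ℤ, w.1 ∈ uIcc v.1 c.1 → w.2 ∈ uIcc v.2 c.2 →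
      square k w ⊆ grid X ∩ closedBall x (3 * side k) := fun w h₁ h₂ => by
    have hw : dist (vertex k w) x ≤ 2 * side k := dist_vertex_le_iff.2
      ⟨abs_intCast_mul_sub_le_of_mem_uIcc h₁ (side_pos k).le hv.1 hc.1,
        abs_intCast_mul_sub_le_of_mem_uIcc h₂ (side_pos k).le hv.2 hc.2⟩
    exact subset_inter (square_subset_grid ⟨x, hx, hw⟩)
      ((square_subset_closedBall hw).trans_eq (by ring_nf))
  refine ⟨(⋃ i ∈ uIcc v.1 c.1, square k (i, v.2)) ∪ ⋃ j ∈ uIcc v.2 c.2, square k (c.1, j),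
    union_subset (iUnion₂_subset fun i hi => hW (i, v.2) hi left_mem_uIcc)
      (iUnion₂_subset fun j hj => hW (c.1, j) right_mem_uIcc hj), ?_,
    (subset_biUnion_of_mem (u := fun i => square k (i, v.2)) left_mem_uIcc).trans
      subset_union_left,
    (subset_biUnion_of_mem (u := fun j => square k (c.1, j)) right_mem_uIcc).trans
      subset_union_right⟩
  exact (isPreconnected_biUnion_square_row k _ _ _).union (vertex k (c.1, v.2))
    (mem_biUnion right_mem_uIcc (vertex_mem_square_self _ _))
    (mem_biUnion left_mem_uIcc (vertex_mem_square_self _ _))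
    (isPreconnected_biUnion_square_column k _ _ _)

def tower (x : ℝ × ℝ) (n : ℕ) : Set (ℝ × ℝ) := insert x (⋃ m ∈ Ici n, square m (cornerOf m x))

lemma square_cornerOf_subset_tower {x : ℝ × ℝ} {m n : ℕ} (h : n ≤ m) :
    square m (cornerOf m x) ⊆ tower x n :=
  (subset_biUnion_of_mem (u := fun m => square m (cornerOf m x)) h).trans (subset_insert _ _)

lemma isPreconnected_tower (x : ℝ × ℝ) (n : ℕ) : IsPreconnected (tower x n) := by
  have hU : IsPreconnected (⋃ m ∈ Ici n, square m (cornerOf m x)) :=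
    IsPreconnected.biUnion_of_chain ordConnected_Ici (fun _ _ => isPreconnected_square _ _)
      fun m _ _ => by simpa using square_cornerOf_inter_succ_nonempty m x
  refine hU.subset_closure (subset_insert _ _) (insert_subset_iff.2 ⟨?_, subset_closure⟩)
  rw [Metric.mem_closure_iff]
  intro ε hε
  obtain ⟨m, hm⟩ := exists_side_lt hε
  refine ⟨_, mem_biUnion (le_max_right m n) (vertex_mem_square_self _ _), ?_⟩
  rw [dist_comm]
  exact (dist_vertex_cornerOf_le _ x).trans_lt ((side_antitone (le_max_left m n)).trans_lt hm)

lemma tower_subset_closedBall (x : ℝ × ℝ) (n : ℕ) : tower x n ⊆ closedBall x (2 * side n) :=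
  insert_subset (mem_closedBall_self (by linarith [side_pos n])) <| iUnion₂_subset fun m hm =>
    (square_cornerOf_subset_closedBall m x).trans
      (closedBall_subset_closedBall (by linarith [side_antitone (mem_Ici.1 hm)]))

lemma tower_subset_union_grid {x : ℝ × ℝ} (hx : x ∈ X) (n : ℕ) : tower x n ⊆ X ∪ grid X :=
  insert_subset (Or.inl hx) <| iUnion₂_subset fun m _ => subset_union_right.trans' <|
    square_subset_grid ⟨x, hx, (dist_vertex_cornerOf_le m x).trans (by linarith [side_pos m])⟩

lemma exists_isPreconnected_tower_subset {p x : ℝ × ℝ} {n : ℕ} (hp : p ∈ X) (hx : x ∈ X)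
    (hxp : dist x p ≤ side n) :
    ∃ P ⊆ (X ∪ grid X) ∩ closedBall p (3 * side n), IsPreconnected P ∧ p ∈ P ∧ tower x n ⊆ P := by
  have hcx : dist (vertex n (cornerOf n x)) p ≤ 2 * side n := by
    linarith [dist_triangle (vertex n (cornerOf n x)) x p, dist_vertex_cornerOf_le n x]
  obtain ⟨W, hW, hWc, hWx, hWp⟩ := exists_walk hp hcx
  have hTx : tower x n ⊆ closedBall p (3 * side n) :=
    (tower_subset_closedBall x n).trans (closedBall_subset_closedBall' (by linarith))
  have hTp : tower p n ⊆ closedBall p (3 * side n) :=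
    (tower_subset_closedBall p n).trans (closedBall_subset_closedBall (by linarith [side_pos n]))
  refine ⟨tower x n ∪ W ∪ tower p n, ?_, ?_, Or.inr (mem_insert _ _),
    subset_union_left.trans subset_union_left⟩
  · exact union_subset (union_subset (subset_inter (tower_subset_union_grid hx n) hTx)
      (hW.trans (inter_subset_inter_left _ subset_union_right)))
      (subset_inter (tower_subset_union_grid hp n) hTp)
  · have hxW := (isPreconnected_tower x n).union _
      (square_cornerOf_subset_tower le_rfl (vertex_mem_square_self _ _))
      (hWx (vertex_mem_square_self _ _)) hWc
    exact hxW.union _ (Or.inr (hWp (vertex_mem_square_self _ _)))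
      (square_cornerOf_subset_tower le_rfl (vertex_mem_square_self _ _)) (isPreconnected_tower p n)

lemma isPreconnected_union_grid (hX : IsPreconnected X) (hXne : X.Nonempty) :
    IsPreconnected (X ∪ grid X) := by
  obtain ⟨x₀, hx₀⟩ := hXne
  refine isPreconnected_of_forall x₀ fun q hq => ?_
  rcases hq with hq | hq
  · exact ⟨X, subset_union_left, hx₀, hq, hX⟩
  obtain ⟨k, v, ⟨x, hx, hvx⟩, hqs⟩ := mem_grid.1 hq
  obtain ⟨W, hW, hWc, hWv, hWx⟩ := exists_walk hx hvx
  refine ⟨X ∪ (tower x k ∪ W), union_subset subset_union_left (union_subset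
      (tower_subset_union_grid hx k) (hW.trans (inter_subset_left.trans subset_union_right))),
    Or.inl hx₀, Or.inr (Or.inr (hWv hqs)), ?_⟩
  exact hX.union x hx (Or.inl (mem_insert _ _)) ((isPreconnected_tower x k).union _
    (square_cornerOf_subset_tower le_rfl (vertex_mem_square_self _ _))
    (hWx (vertex_mem_square_self _ _)) hWc)

lemma isBounded_grid (hX : Bornology.IsBounded X) : Bornology.IsBounded (grid X) := by
  obtain ⟨R, hR⟩ := hX.subset_closedBall 0
  refine (isBounded_closedBall (x := 0) (r := R + 3)).subset fun q hq => ?_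
  obtain ⟨k, v, ⟨x, hx, hvx⟩, hqs⟩ := mem_grid.1 hq
  have hqx := mem_closedBall.1 (square_subset_closedBall hvx hqs)
  have hx0 := mem_closedBall.1 (hR hx)
  rw [mem_closedBall]
  linarith [dist_triangle q x 0, side_le_one k]

lemma isClosed_union_grid (hXc : IsClosed X) (hXb : Bornology.IsBounded X)
    (hXne : X.Nonempty) : IsClosed (X ∪ grid X) := by
  refine isClosed_of_closure_subset fun z hz => ?_
  by_contra hzS
  obtain ⟨N, r, hr, hsub⟩ := exists_inter_ball_subset hXc hXne fun h => hzS (Or.inl h)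
  have hT : IsClosed (⋃ e ∈ edgesUpTo X N, segment ℝ e.1 e.2) :=
    (finite_edgesUpTo hXb N).isClosed_biUnion fun e _ => (isCompact_segment e.1 e.2).isClosed
  have hzT : z ∈ ⋃ e ∈ edgesUpTo X N, segment ℝ e.1 e.2 := by
    refine hT.closure_subset_iff.2 ((inter_comm _ _).trans_subset hsub) ?_
    exact isOpen_ball.inter_closure ⟨mem_ball_self hr, hz⟩
  obtain ⟨e, he, hze⟩ := mem_iUnion₂.1 hzT
  exact hzS (Or.inr (segment_subset_grid he hze))

lemma isCompact_union_grid (hX : IsCompact X) (hXne : X.Nonempty) : IsCompact (X ∪ grid X) :=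
  isCompact_of_isClosed_isBounded (isClosed_union_grid hX.isClosed hX.isBounded hXne)
    (hX.isBounded.union (isBounded_grid hX.isBounded))

lemma exists_isPreconnected_of_notMem (hXc : IsClosed X) (hXb : Bornology.IsBounded X)
    (hXne : X.Nonempty) {p : ℝ × ℝ} (hp : p ∉ X) {ε : ℝ} (hε : 0 < ε) :
    ∃ δ > 0, ∀ q ∈ X ∪ grid X, dist q p < δ →
      ∃ P ⊆ (X ∪ grid X) ∩ ball p ε, IsPreconnected P ∧ p ∈ P ∧ q ∈ P := by
  obtain ⟨N, r, hr, hsub⟩ := exists_inter_ball_subset hXc hXne hp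
  obtain ⟨δ, hδ, hseg⟩ := exists_segment_subset_grid hXb N p
  refine ⟨min δ (min r ε), by positivity, fun q hq hqp => ⟨segment ℝ p q, ?_,
    (convex_segment p q).isPreconnected, left_mem_segment _ _ _, right_mem_segment _ _ _⟩⟩
  simp only [lt_min_iff] at hqp
  exact subset_inter ((hseg q (hsub ⟨hq, mem_ball.2 hqp.2.1⟩) hqp.1).trans subset_union_right)
    ((convex_ball p ε).segment_subset (mem_ball_self hε) (mem_ball.2 hqp.2.2))

lemma exists_isPreconnected_of_mem_square {p q : ℝ × ℝ} {M l : ℕ} {v : ℤ × ℤ} (hp : p ∈ X)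
    (hv : Near X l v) (hql : q ∈ square l v) (hl : M + 3 ≤ l) (hqp : dist q p ≤ side M / 4) :
    ∃ P ⊆ (X ∪ grid X) ∩ closedBall p (3 * side M), IsPreconnected P ∧ p ∈ P ∧ q ∈ P := by
  obtain ⟨x, hx, hvx⟩ := hv
  have hqx := mem_closedBall.1 (square_subset_closedBall hvx hql)
  have hlM : side l ≤ side M / 8 :=
    calc side l ≤ side (M + 3) := side_antitone hl
      _ = side M / 8 := by rw [side_add]; norm_num
  have hxp : dist x p ≤ side M := by
    linarith [dist_triangle x q p, dist_comm x q, side_pos M]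
  obtain ⟨P, hP, hPc, hpP, hxP⟩ := exists_isPreconnected_tower_subset hp hx hxp
  obtain ⟨W, hW, hWc, hWv, hWx⟩ := exists_walk hx hvx
  refine ⟨P ∪ W, union_subset hP ?_, hPc.union _
    (hxP (square_cornerOf_subset_tower (by omega) (vertex_mem_square_self _ _)))
    (hWx (vertex_mem_square_self _ _)) hWc, Or.inl hpP, Or.inr (hWv hql)⟩
  refine hW.trans (inter_subset_inter subset_union_right fun y hy => ?_)
  rw [mem_closedBall] at hy ⊢
  linarith [dist_triangle y x p, side_pos M]

/-- Points near `p` on squares of level `≤ M + 2` share an edge with `p`. -/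
lemma exists_isPreconnected_of_mem (hXb : Bornology.IsBounded X) {p : ℝ × ℝ} (hp : p ∈ X)
    {ε : ℝ} (hε : 0 < ε) :
    ∃ δ > 0, ∀ q ∈ X ∪ grid X, dist q p < δ →
      ∃ P ⊆ (X ∪ grid X) ∩ ball p ε, IsPreconnected P ∧ p ∈ P ∧ q ∈ P := by
  obtain ⟨M, hM⟩ := exists_side_lt (show 0 < ε / 3 by positivity)
  obtain ⟨δ, hδ, hseg⟩ := exists_segment_subset_grid hXb (M + 2) p
  have hball : (X ∪ grid X) ∩ closedBall p (3 * side M) ⊆ (X ∪ grid X) ∩ ball p ε :=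
    inter_subset_inter_right _ (closedBall_subset_ball (by linarith))
  have hM2 : side (M + 2) = side M / 4 := by rw [side_add]; norm_num
  refine ⟨min δ (side (M + 2)), lt_min hδ (side_pos _), fun q hq hqp => ?_⟩
  simp only [lt_min_iff] at hqp
  rcases hq with hqX | hqG
  · obtain ⟨P, hP, hPc, hpP, hqP⟩ :=
      exists_isPreconnected_tower_subset hp hqX (n := M) (by linarith [side_pos M])
    exact ⟨P, hP.trans hball, hPc, hpP, hqP (mem_insert _ _)⟩
  obtain ⟨l, v, hv, hql⟩ := mem_grid.1 hqG
  rcases le_or_gt l (M + 2) with hl | hl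
  · refine ⟨segment ℝ p q, subset_inter ?_ ?_, (convex_segment p q).isPreconnected,
      left_mem_segment _ _ _, right_mem_segment _ _ _⟩
    · exact (hseg q (square_subset_edgesUpTo hv hl hql) hqp.1).trans subset_union_right
    · exact (convex_ball p ε).segment_subset (mem_ball_self hε)
        (mem_ball.2 (by linarith [side_pos M]))
  obtain ⟨P, hP, hPc, hpP, hqP⟩ :=
    exists_isPreconnected_of_mem_square hp hv hql hl (by linarith)
  exact ⟨P, hP.trans hball, hPc, hpP, hqP⟩

lemma locallyConnectedSpace_union_grid (hX : IsCompact X) (hXne : X.Nonempty) :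
    LocallyConnectedSpace ↥(X ∪ grid X) :=
  locallyConnectedSpace_of_forall_exists_isPreconnected fun p _ ε hε => by
    by_cases hp : p ∈ X
    · exact exists_isPreconnected_of_mem hX.isBounded hp hε
    · exact exists_isPreconnected_of_notMem hX.isClosed hX.isBounded hXne hp hε

lemma suslinian_union_grid (hX : IsCompact X) (hXne : X.Nonempty) (hXs : Suslinian X) :
    Suslinian (X ∪ grid X) := by
  intro 𝒞 h𝒞 hdisj
  set edges := ⋃ (k : ℕ) (v : ℤ × ℤ), squareEdges k v
  have hedges : edges.Countable :=
    countable_iUnion fun k => countable_iUnion fun v => (finite_squareEdges k v).countable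
  have hsub : 𝒞 ⊆ {K ∈ 𝒞 | K ⊆ X} ∪
      ⋃ e ∈ edges, {K ∈ 𝒞 | 0 < volume ((AffineMap.lineMap e.1 e.2 : ℝ → ℝ × ℝ) ⁻¹' K)} := by
    intro K hK
    obtain ⟨hKS, -, hKconn, hKnt⟩ := h𝒞 K hK
    by_cases hKX : K ⊆ X
    · exact Or.inl ⟨hK, hKX⟩
    obtain ⟨z, hzK, hzX⟩ := not_subset.1 hKX
    obtain ⟨N, r, hr, hNr⟩ := exists_inter_ball_subset hX.isClosed hXne hzX
    obtain ⟨e, he, hpos⟩ := exists_volume_preimage_pos (finite_edgesUpTo hX.isBounded N)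
      (fun e _ => ⟨_, lipschitzWith_lineMap e.1 e.2⟩) hKconn.isPreconnected hKnt hzK hr
      ((inter_subset_inter_left _ hKS).trans
        (hNr.trans (biUnion_mono subset_rfl fun e _ => segment_subset_range_lineMap e.1 e.2)))
    refine Or.inr (mem_biUnion ?_ ⟨hK, hpos⟩)
    simp only [edgesUpTo, edges, mem_iUnion] at he ⊢
    obtain ⟨k, -, v, -, he⟩ := he
    exact ⟨k, v, he⟩
  refine ((hXs _ (fun K hK => ⟨hK.2, (h𝒞 K hK.1).2⟩) (hdisj.mono (sep_subset _ _))).union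
    (hedges.biUnion fun e _ => countable_setOf_volume_preimage_pos hdisj
      (fun K hK => (h𝒞 K hK).2.1.isClosed) AffineMap.lineMap_continuous)).mono hsub

end DyadicGrid

open DyadicGrid in
theorem stmt9 (X : Set (ℝ × ℝ))
    (hXne : X.Nonempty) (hXcomp : IsCompact X) (hXconn : IsConnected X)
    (hXsus : Suslinian X) :
    ∃ X' : Set (ℝ × ℝ), X ⊆ X' ∧ X'.Nonempty ∧ IsCompact X' ∧ IsConnected X' ∧
      Suslinian X' ∧ LocallyConnectedSpace X' :=
  ⟨X ∪ grid X, subset_union_left, hXne.mono subset_union_left, isCompact_union_grid hXcomp hXne,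
    ⟨hXne.mono subset_union_left, isPreconnected_union_grid hXconn.isPreconnected hXne⟩,
    suslinian_union_grid hXcomp hXne hXsus, locallyConnectedSpace_union_grid hXcomp hXne⟩
end

section
/- Let X be a plane continuum and suppose X' ⊇ X is a continuum such that X' \ X is contained in a countable union of arcs. If X is Suslinian, then X' is Suslinian. -/
/-!
A nondegenerate subcontinuum `K` of `X'` not contained in the closed set `X` has a point `p ∉ X`;
by boundary bumping, `K` contains a nondegenerate subcontinuum in a small ball around `p`, hence
in `X' \ X ⊆ ⋃ Aₙ`, and by Baire's theorem a smaller one inside a single arc `Aₙ`. So every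
member of a disjoint family of nondegenerate subcontinua of `X'` contains a nondegenerate
subcontinuum of one of the countably many Suslinian sets `X, A₀, A₁, …`, and the family is
countable. Arcs are Suslinian because each of their nondegenerate subcontinua contains a point
with rational parameter.
-/

open Set Topology unitInterval

/-- `A` is an arc: a homeomorphic image of `[0,1]` (equivalently, by
compactness, the image of a continuous injection). -/
def IsArc {α : Type*} [TopologicalSpace α] (A : Set α) : Prop :=
  ∃ f : unitInterval → α, Continuous f ∧ Function.Injective f ∧ Set.range f = A

theorem Set.Pairwise.countable_of_inter_nonempty {α : Type*} {𝒞 : Set (Set α)} {S : Set α}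
    (hdisj : 𝒞.Pairwise Disjoint) (hS : S.Countable) (hmeet : ∀ K ∈ 𝒞, (K ∩ S).Nonempty) :
    𝒞.Countable := by
  have hfiber : ∀ x, {K ∈ 𝒞 | x ∈ K}.Subsingleton := fun x K₁ h₁ K₂ h₂ =>
    hdisj.eq h₁.1 h₂.1 (not_disjoint_iff.2 ⟨x, h₁.2, h₂.2⟩)
  refine (hS.biUnion fun x _ => (hfiber x).countable).mono fun K hK => ?_
  obtain ⟨x, hxK, hxS⟩ := hmeet K hK
  exact mem_biUnion hxS ⟨hK, hxK⟩

section Topological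

variable {α : Type*} [TopologicalSpace α]

def IsNondegenerateContinuum (K : Set α) : Prop :=
  IsCompact K ∧ IsConnected K ∧ K.Nontrivial

theorem Suslinian.countable_of_forall_exists_subcontinuum {B : Set α} (hB : Suslinian B)
    {𝒞 : Set (Set α)} (hdisj : 𝒞.Pairwise Disjoint)
    (h : ∀ K ∈ 𝒞, ∃ D ⊆ K ∩ B, IsNondegenerateContinuum D) : 𝒞.Countable := by
  choose! D hDsub hD using h
  have hDK : ∀ K ∈ 𝒞, D K ⊆ K := fun K hK => (hDsub K hK).trans inter_subset_left
  have hDinj : InjOn D 𝒞 := by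
    intro K₁ h₁ K₂ h₂ heq
    by_contra hne
    obtain ⟨z, hz⟩ := (hD K₁ h₁).2.1.nonempty
    exact disjoint_left.1 (hdisj h₁ h₂ hne) (hDK K₁ h₁ hz) (hDK K₂ h₂ (heq ▸ hz))
  refine countable_of_injective_of_countable_image hDinj (hB _ ?_ ?_)
  · rintro _ ⟨K, hK, rfl⟩
    exact ⟨(hDsub K hK).trans inter_subset_right, hD K hK⟩
  · rintro _ ⟨K₁, h₁, rfl⟩ _ ⟨K₂, h₂, rfl⟩ hne
    exact (hdisj h₁ h₂ fun h => hne (congrArg D h)).mono (hDK K₁ h₁) (hDK K₂ h₂)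

theorem Suslinian.of_forall_exists_subcontinuum {ι : Type*} [Countable ι] {X : Set α}
    {B : ι → Set α} (hB : ∀ i, Suslinian (B i))
    (h : ∀ K ⊆ X, IsNondegenerateContinuum K →
      ∃ i, ∃ D ⊆ K ∩ B i, IsNondegenerateContinuum D) :
    Suslinian X := by
  intro 𝒞 h𝒞 hdisj
  have hfiber : ∀ i, {K ∈ 𝒞 | ∃ D ⊆ K ∩ B i, IsNondegenerateContinuum D}.Countable :=
    fun i => (hB i).countable_of_forall_exists_subcontinuum (hdisj.mono (sep_subset _ _))
      fun K hK => hK.2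
  refine (countable_iUnion hfiber).mono fun K hK => ?_
  obtain ⟨i, hi⟩ := h K (h𝒞 K hK).1 (h𝒞 K hK).2
  exact mem_iUnion_of_mem i ⟨hK, hi⟩

theorem exists_rat_mem_of_isPreconnected {s : Set ℝ} (hs : IsPreconnected s)
    (hnt : s.Nontrivial) : ∃ q : ℚ, (q : ℝ) ∈ s := by
  obtain ⟨a, ha, b, hb, hab⟩ := hnt.exists_lt
  obtain ⟨q, haq, hqb⟩ := exists_rat_btwn hab
  exact ⟨q, hs.ordConnected.out ha hb ⟨haq.le, hqb.le⟩⟩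

theorem IsArc.isClosed [T2Space α] {A : Set α} (hA : IsArc A) : IsClosed A := by
  obtain ⟨f, hf, -, rfl⟩ := hA
  exact (isCompact_range hf).isClosed

theorem IsArc.suslinian [T2Space α] {A : Set α} (hA : IsArc A) : Suslinian A := by
  obtain ⟨f, hf, hinj, rfl⟩ := hA
  intro 𝒞 h𝒞 hdisj
  have hS : (f '' (((↑) : I → ℝ) ⁻¹' range ((↑) : ℚ → ℝ))).Countable :=
    ((countable_range _).preimage Subtype.val_injective).image f
  refine hdisj.countable_of_inter_nonempty hS fun D hD => ?_
  obtain ⟨hDf, -, hDconn, a, ha, b, hb, hab⟩ := h𝒞 D hD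
  obtain ⟨s, rfl⟩ := hDf ha
  obtain ⟨u, rfl⟩ := hDf hb
  have hE : IsPreconnected (Subtype.val '' (f ⁻¹' D)) :=
    (hDconn.preimage_of_isClosedMap hinj hf.isClosedMap hDf).isPreconnected.image _
      continuous_subtype_val.continuousOn
  have hEnt : (Subtype.val '' (f ⁻¹' D)).Nontrivial :=
    Nontrivial.image ⟨s, ha, u, hb, fun h => hab (h ▸ rfl)⟩ Subtype.val_injective
  obtain ⟨q, t, htD, htq⟩ := exists_rat_mem_of_isPreconnected hE hEnt
  exact ⟨f t, htD, t, ⟨q, htq.symm⟩, rfl⟩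

theorem exists_isClopen_mem_disjoint_of_disjoint_connectedComponent {Y : Type*}
    [TopologicalSpace Y] [CompactSpace Y] [T2Space Y] {x : Y} {B : Set Y} (hB : IsClosed B)
    (h : Disjoint (connectedComponent x) B) : ∃ V, IsClopen V ∧ x ∈ V ∧ Disjoint V B := by
  rw [connectedComponent_eq_iInter_isClopen, disjoint_iff_inter_eq_empty, inter_comm] at h
  obtain ⟨t, ht⟩ := hB.isCompact.elim_finite_subfamily_closed _
    (fun s : {s : Set Y // IsClopen s ∧ x ∈ s} => s.2.1.1) h
  refine ⟨⋂ s ∈ t, (s : Set Y), isClopen_biInter_finset fun s _ => s.2.1,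
    mem_iInter₂.2 fun s _ => s.2.2, ?_⟩
  rwa [disjoint_iff_inter_eq_empty, inter_comm]

theorem IsConnected.boundary_bumping [T2Space α] {K U S : Set α} {p : α} (hK : IsConnected K)
    (hKc : IsCompact K) (hU : IsOpen U) (hS : IsClosed S) (hUS : U ⊆ S) (hp : p ∈ K ∩ S)
    (hKU : ¬ K ⊆ U) :
    ∃ C ⊆ K ∩ S, p ∈ C ∧ IsCompact C ∧ IsConnected C ∧ (C ∩ (S \ U)).Nonempty := by
  have : CompactSpace (K ∩ S : Set α) := isCompact_iff_compactSpace.1 (hKc.inter_right hS)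
  let x : (K ∩ S : Set α) := ⟨p, hp⟩
  refine ⟨Subtype.val '' connectedComponent x, image_subset_iff.2 fun y _ => y.2,
    ⟨x, mem_connectedComponent, rfl⟩,
    isClosed_connectedComponent.isCompact.image continuous_subtype_val,
    isConnected_connectedComponent.image _ continuous_subtype_val.continuousOn, ?_⟩
  by_contra hdisj
  have hcomp : Disjoint (connectedComponent x) (Subtype.val ⁻¹' Uᶜ) :=
    disjoint_left.2 fun y hy hyU => hdisj ⟨y, ⟨y, hy, rfl⟩, y.2.2, hyU⟩
  obtain ⟨V, hV, hxV, hVU⟩ := exists_isClopen_mem_disjoint_of_disjoint_connectedComponent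
    (hU.isClosed_compl.preimage continuous_subtype_val) hcomp
  obtain ⟨O, hO, rfl⟩ := isOpen_induced_iff.1 hV.isOpen
  -- `K ∩ S ∩ O` is clopen in `K`, contains `p` and lies in `U`, against connectedness of `K`.
  have hWcl : IsClosed (K ∩ S ∩ O) := by
    simpa only [Subtype.image_preimage_coe] using
      (hV.isClosed.isCompact.image continuous_subtype_val).isClosed
  have hWU : K ∩ S ∩ O ⊆ U := fun y hy => by
    by_contra hyU
    exact disjoint_left.1 hVU
      (show (⟨y, hy.1⟩ : (K ∩ S : Set α)) ∈ Subtype.val ⁻¹' O from hy.2) hyU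
  rcases isPreconnected_iff_subset_of_disjoint.1 hK.isPreconnected (O ∩ U) (K ∩ S ∩ O)ᶜ
    (hO.inter hU) hWcl.isOpen_compl
    (fun y hyK => by
      by_cases hy : y ∈ S ∩ O
      · exact Or.inl ⟨hy.2, hWU ⟨⟨hyK, hy.1⟩, hy.2⟩⟩
      · exact Or.inr fun hyW => hy ⟨hyW.1.2, hyW.2⟩)
    (eq_empty_of_forall_notMem <| by
      rintro y ⟨hyK, ⟨hyO, hyU⟩, hyW⟩
      exact hyW ⟨⟨hyK, hUS hyU⟩, hyO⟩)
    with hKOU | hKW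
  · exact hKU (hKOU.trans inter_subset_right)
  · exact hKW hp.1 ⟨hp, hxV⟩

end Topological

section Metric

open Metric

variable {α : Type*} [MetricSpace α]

theorem IsNondegenerateContinuum.exists_subset_closedBall {K : Set α}
    (hK : IsNondegenerateContinuum K) {p : α} (hp : p ∈ K) {r : ℝ} (hr : 0 < r) :
    ∃ C ⊆ K ∩ closedBall p r, IsNondegenerateContinuum C := by
  by_cases hKU : K ⊆ ball p r
  · exact ⟨K, subset_inter subset_rfl (hKU.trans ball_subset_closedBall), hK⟩
  obtain ⟨C, hCsub, hpC, hCc, hCconn, y, hyC, -, hyU⟩ :=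
    hK.2.1.boundary_bumping hK.1 isOpen_ball isClosed_closedBall ball_subset_closedBall
      ⟨hp, mem_closedBall_self hr.le⟩ hKU
  exact ⟨C, hCsub, hCc, hCconn, p, hpC, y, hyC, fun h => hyU (h ▸ mem_ball_self hr)⟩

theorem IsNondegenerateContinuum.exists_subset_of_subset_iUnion {ι : Type*} [Countable ι]
    {C : Set α} (hC : IsNondegenerateContinuum C) {A : ι → Set α} (hA : ∀ i, IsClosed (A i))
    (hCA : C ⊆ ⋃ i, A i) : ∃ i, ∃ D ⊆ C ∩ A i, IsNondegenerateContinuum D := by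
  have : CompactSpace C := isCompact_iff_compactSpace.1 hC.1
  have : Nonempty C := hC.2.1.nonempty.to_subtype
  obtain ⟨i, y, hy⟩ := nonempty_interior_of_iUnion_of_closed
    (fun i => (hA i).preimage continuous_subtype_val)
    (eq_univ_of_forall fun z => by simpa using hCA z.2)
  have hAy : A i ∈ 𝓝[C] (y : α) := by
    have hy' := mem_nhds_subtype_iff_nhdsWithin.1 (mem_interior_iff_mem_nhds.1 hy)
    rw [Subtype.image_preimage_coe] at hy'
    exact Filter.mem_of_superset hy' inter_subset_right
  obtain ⟨ε, hε, hball⟩ := mem_nhdsWithin_iff.1 hAy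
  obtain ⟨D, hDsub, hD⟩ := hC.exists_subset_closedBall y.2 (half_pos hε)
  refine ⟨i, D, fun z hz => ⟨(hDsub hz).1, hball ⟨?_, (hDsub hz).1⟩⟩, hD⟩
  exact closedBall_subset_ball (half_lt_self hε) (hDsub hz).2

theorem IsNondegenerateContinuum.exists_subset_of_diff_subset_iUnion {ι : Type*} [Countable ι]
    {X X' K : Set α} {A : ι → Set α} (hX : IsClosed X) (hA : ∀ i, IsClosed (A i))
    (hcover : X' \ X ⊆ ⋃ i, A i) (hK : IsNondegenerateContinuum K) (hKX' : K ⊆ X')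
    (hKX : ¬ K ⊆ X) : ∃ i, ∃ D ⊆ K ∩ A i, IsNondegenerateContinuum D := by
  obtain ⟨p, hpK, hpX⟩ := not_subset.1 hKX
  obtain ⟨r, hr, hrX⟩ := nhds_basis_closedBall.mem_iff.1 (hX.isOpen_compl.mem_nhds hpX)
  obtain ⟨C, hCsub, hC⟩ := hK.exists_subset_closedBall hpK hr
  obtain ⟨i, D, hDsub, hD⟩ := hC.exists_subset_of_subset_iUnion hA
    fun z hz => hcover ⟨hKX' (hCsub hz).1, hrX (hCsub hz).2⟩
  exact ⟨i, D, fun z hz => ⟨(hCsub (hDsub hz).1).1, (hDsub hz).2⟩, hD⟩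

theorem Suslinian.of_diff_subset_iUnion {ι : Type*} [Countable ι] {X X' : Set α}
    {A : ι → Set α} (hX : IsClosed X) (hXs : Suslinian X) (hA : ∀ i, IsClosed (A i))
    (hAs : ∀ i, Suslinian (A i)) (hcover : X' \ X ⊆ ⋃ i, A i) : Suslinian X' := by
  refine Suslinian.of_forall_exists_subcontinuum (B := fun o : Option ι => o.elim X A)
    (Option.forall.2 ⟨hXs, hAs⟩) fun K hKX' hK => ?_
  by_cases hKX : K ⊆ X
  · exact ⟨none, K, subset_inter subset_rfl hKX, hK⟩
  · obtain ⟨i, D, hD⟩ := hK.exists_subset_of_diff_subset_iUnion hX hA hcover hKX' hKX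
    exact ⟨some i, D, hD⟩

end Metric

theorem stmt10_general (X X' : Set (ℝ × ℝ))
    (hXcomp : IsCompact X)
    (A : ℕ → Set (ℝ × ℝ)) (hA : ∀ n, IsArc (A n))
    (hcover : X' \ X ⊆ ⋃ n, A n)
    (hXsus : Suslinian X) :
    Suslinian X' :=
  hXsus.of_diff_subset_iUnion hXcomp.isClosed (fun n => (hA n).isClosed)
    (fun n => (hA n).suslinian) hcover

theorem stmt10 (X X' : Set (ℝ × ℝ))
    (hXcomp : IsCompact X) (hXconn : IsConnected X)
    (hX'comp : IsCompact X') (hX'conn : IsConnected X')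
    (hsub : X ⊆ X')
    (A : ℕ → Set (ℝ × ℝ)) (hA : ∀ n, IsArc (A n))
    (hcover : X' \ X ⊆ ⋃ n, A n)
    (hXsus : Suslinian X) :
    Suslinian X' :=
  stmt10_general X X' hXcomp A hA hcover hXsus
end

section
/- If X is a regular continuum (has a basis of open sets with finite frontiers), then every totally disconnected subset Y ⊆ X is zero-dimensional. -/
open Set Topology

/-!
Shrink a neighbourhood of `y` to an open set `W` with finite frontier. Total disconnectedness
gives a relatively clopen `D ∋ y` missing the finitely many points of `frontier W`, and then
`W ∩ D = closure W ∩ D` is relatively clopen in `Y`.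
-/

namespace RelClopen

variable {α : Type*} [TopologicalSpace α] {Y C D W : Set α}

theorem self : RelClopen Y Y :=
  ⟨⟨univ, isOpen_univ, (univ_inter Y).symm⟩, ⟨univ, isClosed_univ, (univ_inter Y).symm⟩⟩

theorem subset (hC : RelClopen Y C) : C ⊆ Y := by
  obtain ⟨⟨U, -, rfl⟩, -⟩ := hC
  exact inter_subset_right

theorem inter (hC : RelClopen Y C) (hD : RelClopen Y D) : RelClopen Y (C ∩ D) := by
  obtain ⟨⟨U, hU, hCU⟩, ⟨F, hF, hCF⟩⟩ := hC
  obtain ⟨⟨U', hU', hDU⟩, ⟨F', hF', hDF⟩⟩ := hD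
  exact ⟨⟨U ∩ U', hU.inter hU', by rw [hCU, hDU, ← inter_inter_distrib_right]⟩,
    ⟨F ∩ F', hF.inter hF', by rw [hCF, hDF, ← inter_inter_distrib_right]⟩⟩

theorem isOpen_inter_of_disjoint_frontier (hD : RelClopen Y D) (hW : IsOpen W)
    (hDW : Disjoint D (frontier W)) : RelClopen Y (W ∩ D) := by
  obtain ⟨⟨U, hU, hDU⟩, ⟨F, hF, hDF⟩⟩ := hD
  have hclosure : closure W ∩ D = W ∩ D := by
    refine subset_antisymm (fun x ⟨hxW, hxD⟩ => ⟨?_, hxD⟩)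
      (inter_subset_inter_left _ subset_closure)
    by_contra hx
    exact hDW.notMem_of_mem_left hxD ⟨hxW, by rwa [hW.interior_eq]⟩
  refine ⟨⟨W ∩ U, hW.inter hU, by rw [hDU, inter_assoc]⟩,
    ⟨closure W ∩ F, isClosed_closure.inter hF, ?_⟩⟩
  rw [← hclosure, hDF, inter_assoc]

end RelClopen

theorem TotDisconnIn.exists_relClopen_disjoint_of_finite {α : Type*} [TopologicalSpace α]
    {Y S : Set α} (hY : TotDisconnIn Y) {y : α} (hy : y ∈ Y) (hS : S.Finite) (hyS : y ∉ S) :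
    ∃ C, RelClopen Y C ∧ y ∈ C ∧ Disjoint C S := by
  induction S, hS using Set.Finite.induction_on with
  | empty => exact ⟨Y, .self, hy, disjoint_empty _⟩
  | @insert a S _ _ ih =>
    obtain ⟨C, hC, hyC, hCS⟩ := ih fun h => hyS (mem_insert_of_mem a h)
    by_cases ha : a ∈ Y
    · obtain ⟨C', hC', hyC', haC'⟩ := hY y hy a ha fun h => hyS (h ▸ mem_insert y S)
      exact ⟨C ∩ C', hC.inter hC', ⟨hyC, hyC'⟩,
        disjoint_insert_right.2 ⟨fun h => haC' h.2, hCS.mono_left inter_subset_left⟩⟩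
    · exact ⟨C, hC, hyC, disjoint_insert_right.2 ⟨fun h => ha (hC.subset h), hCS⟩⟩

theorem stmt16_general {X : Type*} [MetricSpace X]
    (hreg : ∀ x : X, ∀ U : Set X, IsOpen U → x ∈ U →
      ∃ V : Set X, IsOpen V ∧ x ∈ V ∧ V ⊆ U ∧ (frontier V).Finite)
    (Y : Set X) (hYtd : TotDisconnIn Y) :
    ∀ y ∈ Y, ZeroDimAt Y y := by
  intro y hy V hV hyV
  obtain ⟨W, hW, hyW, hWV, hWfin⟩ := hreg y V hV hyV
  have hyfr : y ∉ frontier W := fun h => (hW.frontier_eq ▸ h).2 hyW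
  obtain ⟨D, hD, hyD, hDW⟩ := hYtd.exists_relClopen_disjoint_of_finite hy hWfin hyfr
  exact ⟨W ∩ D, hD.isOpen_inter_of_disjoint_frontier hW hDW, ⟨hyW, hyD⟩,
    inter_subset_left.trans hWV⟩

theorem stmt16 {X : Type*} [MetricSpace X] [CompactSpace X] [ConnectedSpace X] [Nonempty X]
    (hreg : ∀ x : X, ∀ U : Set X, IsOpen U → x ∈ U →
      ∃ V : Set X, IsOpen V ∧ x ∈ V ∧ V ⊆ U ∧ (frontier V).Finite)
    (Y : Set X) (hYtd : TotDisconnIn Y) :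
    ∀ y ∈ Y, ZeroDimAt Y y :=
  stmt16_general hreg Y hYtd
end
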